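/- arXiv:1706.07027 — 2 statements merged into one kernel-verified Lean document; each statement's English description precedes it below -/
import Mathlib

section
/- Let η : [0,1] → A be continuous. Then the evaluation map g ↦ g(0) is a bijection from the set of C¹ maps g : [0,1] → A satisfying g'(θ) + η(θ)·g(θ) − g(θ)·η(θ) = 0 for all θ and the periodicity condition g(1) = g(0), onto the commutant {g₀ ∈ A : g₀·Hol_η = Hol_η·g₀} of the holonomy. In particular, a solution g of the equation satisfies g(1) = Hol_η · g(0) · Hol_η⁻¹, and it closes up to a loop (g(1) = g(0)) exactly when g(0) commutes with Hol_η. -/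
/-!
Conjugating by the horizontal path gauges the isotropy equation away: if `g' = gη - ηg` and
`Ψ' = -ηΨ`, then both `θ ↦ g θ * Ψ θ` and `θ ↦ Ψ θ * g 0` solve the linear equation `x' = -ηx`
with the same initial value, so by uniqueness `g θ = Ψ θ * g 0 * (Ψ θ)⁻¹`. Evaluating at `θ = 1`
gives the conjugation formula and the periodicity criterion, while conversely
`θ ↦ Ψ θ * g₀ * (Ψ θ)⁻¹` is a solution for every `g₀`, periodic when `g₀` commutes with `Ψ 1`.
-/

open Set

/-- A C¹ map `g : [0,1] → A` with derivative `Dg` solving the isotropy equation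
`g' + ηg - gη = 0` on `[0,1]`. -/
def IsIsotropySol {A : Type*} [NormedRing A] [NormedAlgebra ℝ A]
    (η g Dg : ℝ → A) : Prop :=
  (∀ θ ∈ Icc (0:ℝ) 1, HasDerivWithinAt g (Dg θ) (Icc (0:ℝ) 1) θ) ∧
  (∀ θ ∈ Icc (0:ℝ) 1, Dg θ + η θ * g θ - g θ * η θ = 0)

theorem eqOn_Icc_of_hasDerivWithinAt_mul {E : Type*} [NormedRing E] [NormedAlgebra ℝ E]
    {a b : ℝ} {η f g : ℝ → E} (hη : ContinuousOn η (Icc a b))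
    (hf : ∀ t ∈ Icc a b, HasDerivWithinAt f (η t * f t) (Icc a b) t)
    (hg : ∀ t ∈ Icc a b, HasDerivWithinAt g (η t * g t) (Icc a b) t)
    (ha : f a = g a) : EqOn f g (Icc a b) := by
  obtain ⟨C, hC⟩ := isCompact_Icc.exists_bound_of_continuousOn hη
  have hlip : ∀ t ∈ Ico a b, LipschitzOnWith C.toNNReal (η t * ·) univ := by
    intro t ht
    refine lipschitzOnWith_univ.2 (LipschitzWith.of_dist_le_mul fun x y => ?_)
    calc dist (η t * x) (η t * y) = ‖η t * (x - y)‖ := by rw [dist_eq_norm, mul_sub]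
      _ ≤ ‖η t‖ * ‖x - y‖ := norm_mul_le _ _
      _ ≤ C.toNNReal * dist x y := by
        rw [dist_eq_norm]
        gcongr
        exact (hC t (Ico_subset_Icc_self ht)).trans (Real.le_coe_toNNReal C)
  have hright : ∀ u : ℝ → E, (∀ t ∈ Icc a b, HasDerivWithinAt u (η t * u t) (Icc a b) t) →
      ∀ t ∈ Ico a b, HasDerivWithinAt u (η t * u t) (Ici t) t := fun u hu t ht =>
    (hu t (Ico_subset_Icc_self ht)).mono_of_mem_nhdsWithin (Icc_mem_nhdsGE_of_mem ht)
  exact ODE_solution_unique_of_mem_Icc_right (s := fun _ => univ) hlip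
    (fun t ht => (hf t ht).continuousWithinAt) (hright f hf) (fun _ _ => trivial)
    (fun t ht => (hg t ht).continuousWithinAt) (hright g hg) (fun _ _ => trivial) ha

section Holonomy

variable {A : Type*} [NormedRing A] [NormedAlgebra ℝ A] {η Ψ : ℝ → A}

def IsHorizontalPath (η Ψ : ℝ → A) : Prop :=
  ∀ θ ∈ Icc (0:ℝ) 1, HasDerivWithinAt Ψ (-(η θ * Ψ θ)) (Icc (0:ℝ) 1) θ

theorem IsHorizontalPath.eqOn (hη : ContinuousOn η (Icc 0 1)) {Φ : ℝ → A}
    (hΨ : IsHorizontalPath η Ψ) (hΦ : IsHorizontalPath η Φ) (h0 : Ψ 0 = Φ 0) :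
    EqOn Ψ Φ (Icc 0 1) :=
  eqOn_Icc_of_hasDerivWithinAt_mul hη.neg (fun θ hθ => by simpa using hΨ θ hθ)
    (fun θ hθ => by simpa using hΦ θ hθ) h0

theorem IsHorizontalPath.mul_const (hΨ : IsHorizontalPath η Ψ) (c : A) :
    IsHorizontalPath η (fun θ => Ψ θ * c) := fun θ hθ => by
  simpa [mul_assoc] using (hΨ θ hθ).mul_const c

theorem IsIsotropySol.isHorizontalPath_mul {g Dg : ℝ → A} (hg : IsIsotropySol η g Dg)
    (hΨ : IsHorizontalPath η Ψ) : IsHorizontalPath η (fun θ => g θ * Ψ θ) := fun θ hθ => by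
  have hDg : Dg θ = g θ * η θ - η θ * g θ := eq_sub_of_add_eq (sub_eq_zero.1 (hg.2 θ hθ))
  refine ((hg.1 θ hθ).mul (hΨ θ hθ)).congr_deriv ?_
  rw [hDg]
  noncomm_ring

theorem IsIsotropySol.mul_eq_mul {g Dg : ℝ → A} (hη : ContinuousOn η (Icc 0 1))
    (hg : IsIsotropySol η g Dg) (hΨ : IsHorizontalPath η Ψ) (hΨ0 : Ψ 0 = 1) {θ : ℝ}
    (hθ : θ ∈ Icc (0:ℝ) 1) : g θ * Ψ θ = Ψ θ * g 0 :=
  (hg.isHorizontalPath_mul hΨ).eqOn hη (hΨ.mul_const (g 0)) (by simp [hΨ0]) hθ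

theorem IsIsotropySol.eq_conj {g Dg : ℝ → A} (hη : ContinuousOn η (Icc 0 1))
    (hg : IsIsotropySol η g Dg) (hΨ : IsHorizontalPath η Ψ) (hΨ0 : Ψ 0 = 1) {θ : ℝ}
    (hθ : θ ∈ Icc (0:ℝ) 1) (hunit : IsUnit (Ψ θ)) :
    g θ = Ψ θ * g 0 * Ring.inverse (Ψ θ) := by
  rw [← hg.mul_eq_mul hη hΨ hΨ0 hθ, Ring.mul_inverse_cancel_right _ _ hunit]

theorem IsHorizontalPath.hasDerivWithinAt_inverse [HasSummableGeomSeries A]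
    (hΨ : IsHorizontalPath η Ψ) {θ : ℝ} (hθ : θ ∈ Icc (0:ℝ) 1) (hunit : IsUnit (Ψ θ)) :
    HasDerivWithinAt (fun θ => Ring.inverse (Ψ θ)) (Ring.inverse (Ψ θ) * η θ)
      (Icc (0:ℝ) 1) θ := by
  obtain ⟨u, hu⟩ := hunit
  have hinv := (hu ▸ hasFDerivAt_ringInverse (𝕜 := ℝ) u).comp_hasDerivWithinAt θ (hΨ θ hθ)
  refine hinv.congr_deriv ?_
  simp [← hu, mul_assoc]

theorem IsHorizontalPath.isIsotropySol_conj [HasSummableGeomSeries A]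
    (hΨ : IsHorizontalPath η Ψ) (hunit : ∀ θ ∈ Icc (0:ℝ) 1, IsUnit (Ψ θ)) (g₀ : A) :
    IsIsotropySol η (fun θ => Ψ θ * g₀ * Ring.inverse (Ψ θ))
      (fun θ => -(η θ * Ψ θ) * g₀ * Ring.inverse (Ψ θ) +
        Ψ θ * g₀ * (Ring.inverse (Ψ θ) * η θ)) :=
  ⟨fun θ hθ => ((hΨ θ hθ).mul_const g₀).mul (hΨ.hasDerivWithinAt_inverse hθ (hunit θ hθ)),
    fun _ _ => by noncomm_ring⟩

end Holonomy

theorem stmt_6_general {A : Type*} [NormedRing A] [NormedAlgebra ℝ A]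
    [CompleteSpace A] (η Ψ : ℝ → A) (hη : ContinuousOn η (Icc 0 1))
    -- Ψ is the horizontal path of η; it is pointwise invertible, and Hol_η = Ψ 1
    (hΨ : ∀ θ ∈ Icc (0:ℝ) 1, HasDerivWithinAt Ψ (-(η θ * Ψ θ)) (Icc (0:ℝ) 1) θ)
    (hΨ0 : Ψ 0 = 1) (hΨinv : ∀ θ ∈ Icc (0:ℝ) 1, IsUnit (Ψ θ)) :
    -- every solution satisfies g(1) = Hol_η · g(0) · Hol_η⁻¹
    (∀ g Dg : ℝ → A, IsIsotropySol η g Dg →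
      g 1 = Ψ 1 * g 0 * Ring.inverse (Ψ 1)) ∧
    -- a solution closes up to a loop exactly when g(0) commutes with the holonomy
    (∀ g Dg : ℝ → A, IsIsotropySol η g Dg →
      (g 1 = g 0 ↔ g 0 * Ψ 1 = Ψ 1 * g 0)) ∧
    -- surjectivity onto the commutant of the holonomy
    (∀ g₀ : A, g₀ * Ψ 1 = Ψ 1 * g₀ →
      ∃ g Dg : ℝ → A, IsIsotropySol η g Dg ∧ g 0 = g₀ ∧ g 1 = g 0) ∧
    -- injectivity: a solution is determined by its value at 0
    (∀ g₁ Dg₁ g₂ Dg₂ : ℝ → A, IsIsotropySol η g₁ Dg₁ → IsIsotropySol η g₂ Dg₂ →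
      g₁ 0 = g₂ 0 → EqOn g₁ g₂ (Icc (0:ℝ) 1)) := by
  have h1 : (1:ℝ) ∈ Icc (0:ℝ) 1 := right_mem_Icc.2 zero_le_one
  refine ⟨fun g Dg hg => hg.eq_conj hη hΨ hΨ0 h1 (hΨinv 1 h1), fun g Dg hg => ?_,
    fun g₀ hcomm => ?_, fun g₁ Dg₁ g₂ Dg₂ hg₁ hg₂ h0 θ hθ => ?_⟩
  · have hmul := hg.mul_eq_mul hη hΨ hΨ0 h1
    constructor
    · intro h
      rwa [h] at hmul
    · intro h
      exact (hΨinv 1 h1).mul_left_injective (hmul.trans h.symm)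
  · refine ⟨_, _, IsHorizontalPath.isIsotropySol_conj hΨ hΨinv g₀, by simp [hΨ0], ?_⟩
    simp only [hΨ0, Ring.inverse_one, one_mul, mul_one]
    rw [← hcomm, Ring.mul_inverse_cancel_right _ _ (hΨinv 1 h1)]
  · rw [hg₁.eq_conj hη hΨ hΨ0 hθ (hΨinv θ hθ), hg₂.eq_conj hη hΨ hΨ0 hθ (hΨinv θ hθ), h0]

/-- Evaluation at `0` is a bijection between the periodic solutions of `g' + ηg - gη = 0`
and the commutant of the holonomy `Hol_η = Ψ_η(1)`: every solution satisfies
`g(1) = Hol_η · g(0) · Hol_η⁻¹`, it is periodic iff `g(0)` commutes with `Hol_η`,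
every element of the commutant arises as the initial value of a periodic solution, and a
solution is determined on `[0,1]` by its initial value. -/
theorem stmt_6 {A : Type*} [NormedRing A] [NormedAlgebra ℝ A] [NormOneClass A]
    [CompleteSpace A] (η Ψ : ℝ → A) (hη : ContinuousOn η (Icc 0 1))
    -- Ψ is the horizontal path of η; it is pointwise invertible, and Hol_η = Ψ 1
    (hΨ : ∀ θ ∈ Icc (0:ℝ) 1, HasDerivWithinAt Ψ (-(η θ * Ψ θ)) (Icc (0:ℝ) 1) θ)
    (hΨ0 : Ψ 0 = 1) (hΨinv : ∀ θ ∈ Icc (0:ℝ) 1, IsUnit (Ψ θ)) :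
    -- every solution satisfies g(1) = Hol_η · g(0) · Hol_η⁻¹
    (∀ g Dg : ℝ → A, IsIsotropySol η g Dg →
      g 1 = Ψ 1 * g 0 * Ring.inverse (Ψ 1)) ∧
    -- a solution closes up to a loop exactly when g(0) commutes with the holonomy
    (∀ g Dg : ℝ → A, IsIsotropySol η g Dg →
      (g 1 = g 0 ↔ g 0 * Ψ 1 = Ψ 1 * g 0)) ∧
    -- surjectivity onto the commutant of the holonomy
    (∀ g₀ : A, g₀ * Ψ 1 = Ψ 1 * g₀ →
      ∃ g Dg : ℝ → A, IsIsotropySol η g Dg ∧ g 0 = g₀ ∧ g 1 = g 0) ∧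
    -- injectivity: a solution is determined by its value at 0
    (∀ g₁ Dg₁ g₂ Dg₂ : ℝ → A, IsIsotropySol η g₁ Dg₁ → IsIsotropySol η g₂ Dg₂ →
      g₁ 0 = g₂ 0 → EqOn g₁ g₂ (Icc (0:ℝ) 1)) :=
  stmt_6_general η Ψ hη hΨ hΨ0 hΨinv
end

section
/- Let η : [0,1] → A be continuous, let L ∈ A satisfy exp(L) = Hol_η, set h(θ) := Ψ_η(θ)·exp(−θL), and let g₀ ∈ A commute with L (g₀·L = L·g₀). Then the map g(θ) := h(θ)·g₀·h(θ)⁻¹ is C¹, satisfies g'(θ) + η(θ)·g(θ) − g(θ)·η(θ) = 0 for all θ ∈ [0,1], and satisfies g(0) = g(1) = g₀. -/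
/-!
The path `Ψ` stays invertible: for `s ≤ t` the path `Ψ(·) Ψ(s)⁻¹` solves the same equation with
initial value `1`, so Grönwall's inequality keeps `Ψ(t) Ψ(s)⁻¹` within `exp (M (t - s)) - 1` of `1`,
which is `< 1` on steps of a fixed length. Since `exp (-θL)` commutes with `g₀`, the map `g` is
`θ ↦ Ψ(θ) g₀ Ψ(θ)⁻¹`, whose derivative is `g η - η g` by the equation for `Ψ`, and
`g 1 = exp L · g₀ · (exp L)⁻¹ = g₀`.
-/

open Set

theorem forall_mem_Icc_of_uniform_step {P : ℝ → Prop} {a b δ : ℝ} (hδ : 0 < δ) (ha : P a)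
    (hstep : ∀ s ∈ Icc a b, ∀ t ∈ Icc a b, s ≤ t → t ≤ s + δ → P s → P t) :
    ∀ t ∈ Icc a b, P t := by
  have hn : ∀ n : ℕ, ∀ t ∈ Icc a b, t ≤ a + n * δ → P t := by
    intro n
    induction n with
    | zero =>
      intro t ht hta
      rwa [le_antisymm (by simpa using hta) ht.1]
    | succ n ih =>
      intro t ht htn
      by_cases hle : t ≤ a + n * δ
      · exact ih t ht hle
      have hs : a + n * δ ∈ Icc a b :=
        ⟨le_add_of_nonneg_right (by positivity), by linarith [ht.2]⟩
      exact hstep _ hs t ht (by linarith) (by push_cast at htn; linarith) (ih _ hs le_rfl)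
  intro t ht
  obtain ⟨n, hn'⟩ := exists_nat_ge ((b - a) / δ)
  refine hn n t ht ?_
  rw [div_le_iff₀ hδ] at hn'
  linarith [ht.2]

section Conjugation

variable {M₀ : Type*} [MonoidWithZero M₀]

theorem IsUnit.mul_mul_ringInverse_of_commute {u x : M₀} (hu : IsUnit u) (hux : Commute u x) :
    u * x * Ring.inverse u = x := by
  rw [hux.eq, mul_assoc, Ring.mul_inverse_cancel u hu, mul_one]

theorem mul_mul_mul_ringInverse_mul_of_commute {e x : M₀} (p : M₀) (he : IsUnit e)
    (hex : Commute e x) :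
    p * e * x * Ring.inverse (p * e) = p * x * Ring.inverse p := by
  rw [Ring.inverse_mul (Or.inr he), mul_assoc p, mul_assoc p, ← mul_assoc (e * x),
    he.mul_mul_ringInverse_of_commute hex, mul_assoc]

end Conjugation

section Derivative

variable {𝕜 A : Type*} [NontriviallyNormedField 𝕜] [NormedRing A] [NormedAlgebra 𝕜 A]
  [CompleteSpace A]

theorem HasDerivWithinAt.ringInverse {f : 𝕜 → A} {f' : A} {s : Set 𝕜} {x : 𝕜}
    (hf : HasDerivWithinAt f f' s x) (hx : IsUnit (f x)) :
    HasDerivWithinAt (fun y => Ring.inverse (f y))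
      (-(Ring.inverse (f x) * f' * Ring.inverse (f x))) s x := by
  obtain ⟨u, hu⟩ := hx
  have hinv : HasFDerivAt Ring.inverse (-ContinuousLinearMap.mulLeftRight 𝕜 A ↑u⁻¹ ↑u⁻¹) (f x) :=
    hu ▸ hasFDerivAt_ringInverse u
  refine (hinv.comp_hasDerivWithinAt x hf).congr_deriv ?_
  simp [← hu]

theorem HasDerivWithinAt.mul_mul_ringInverse_of_neg_mul {Ψ : 𝕜 → A} {ξ : A} {s : Set 𝕜}
    {x : 𝕜} (hΨ : HasDerivWithinAt Ψ (-(ξ * Ψ x)) s x) (hx : IsUnit (Ψ x)) (a : A) :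
    HasDerivWithinAt (fun y => Ψ y * a * Ring.inverse (Ψ y))
      (Ψ x * a * Ring.inverse (Ψ x) * ξ - ξ * (Ψ x * a * Ring.inverse (Ψ x))) s x := by
  refine ((hΨ.mul_const a).mul (hΨ.ringInverse hx)).congr_deriv ?_
  simp only [neg_mul, mul_neg, neg_neg, mul_assoc, Ring.mul_inverse_cancel _ hx, mul_one]
  abel

end Derivative

section Invertibility

variable {A : Type*} [NormedRing A] [NormedAlgebra ℝ A]

theorem norm_sub_one_le_of_hasDerivWithinAt_neg_mul {X η : ℝ → A} {s t M : ℝ} (hM : 0 < M)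
    (hst : s ≤ t) (hX : ContinuousOn X (Icc s t))
    (hX' : ∀ x ∈ Ico s t, HasDerivWithinAt X (-(η x * X x)) (Ici x) x) (hXs : X s = 1)
    (hη : ∀ x ∈ Ico s t, ‖η x‖ ≤ M) :
    ‖X t - 1‖ ≤ Real.exp (M * (t - s)) - 1 := by
  have hgron := norm_le_gronwallBound_of_norm_deriv_right_le (f := fun x => X x - 1)
    (δ := 0) (K := M) (ε := M) (hX.sub continuousOn_const)
    (fun x hx => (hX' x hx).sub_const 1) (by simp [hXs]) (fun x hx => ?_) t ⟨hst, le_rfl⟩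
  · simpa only [gronwallBound_of_K_ne_0 hM.ne', zero_mul, zero_add, div_self hM.ne', one_mul]
      using hgron
  · calc ‖-(η x * X x)‖ = ‖η x * (X x - 1) + η x‖ := by rw [norm_neg]; congr 1; noncomm_ring
      _ ≤ ‖η x‖ * ‖X x - 1‖ + ‖η x‖ := (norm_add_le _ _).trans (by gcongr; exact norm_mul_le _ _)
      _ ≤ M * ‖X x - 1‖ + M := by gcongr <;> exact hη x hx

theorem isUnit_of_hasDerivWithinAt_neg_mul [CompleteSpace A] {Ψ η : ℝ → A} {a b : ℝ}
    (hη : ContinuousOn η (Icc a b))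
    (hΨ : ∀ θ ∈ Icc a b, HasDerivWithinAt Ψ (-(η θ * Ψ θ)) (Icc a b) θ) (ha : IsUnit (Ψ a)) :
    ∀ t ∈ Icc a b, IsUnit (Ψ t) := by
  obtain ⟨M₀, hM₀⟩ := isCompact_Icc.exists_bound_of_continuousOn hη
  set M := max M₀ 1
  have hM : 0 < M := lt_max_of_lt_right one_pos
  refine forall_mem_Icc_of_uniform_step (δ := Real.log 2 / (2 * M)) (by positivity) ha ?_
  intro s hs t ht hst htδ hus
  have hsub : Icc s t ⊆ Icc a b := Icc_subset_Icc hs.1 ht.2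
  have hnorm : ‖Ψ t * Ring.inverse (Ψ s) - 1‖ ≤ Real.exp (M * (t - s)) - 1 := by
    refine norm_sub_one_le_of_hasDerivWithinAt_neg_mul (η := η)
      (X := fun x => Ψ x * Ring.inverse (Ψ s)) hM hst
      (fun x hx => ((hΨ x (hsub hx)).continuousWithinAt.mono hsub).mul continuousWithinAt_const)
      (fun x hx => ?_) (Ring.mul_inverse_cancel _ hus)
      (fun x hx => (hM₀ x (hsub (Ico_subset_Icc_self hx))).trans (le_max_left _ _))
    have hx' : x ∈ Ico a b := ⟨hs.1.trans hx.1, hx.2.trans_le ht.2⟩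
    simpa only [neg_mul, mul_assoc] using
      ((hΨ x (Ico_subset_Icc_self hx')).mono_of_mem_nhdsWithin
        (Icc_mem_nhdsGE_of_mem hx')).mul_const (Ring.inverse (Ψ s))
  have hexp : Real.exp (M * (t - s)) < 2 := by
    calc Real.exp (M * (t - s)) < Real.exp (Real.log 2) := by
          gcongr
          calc M * (t - s) ≤ M * (Real.log 2 / (2 * M)) := by gcongr; linarith
            _ = Real.log 2 / 2 := by field_simp
            _ < Real.log 2 := by linarith [Real.log_pos one_lt_two]
      _ = 2 := Real.exp_log two_pos
  have hquot : IsUnit (Ψ t * Ring.inverse (Ψ s)) := by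
    simpa using isUnit_one_sub_of_norm_lt_one (x := 1 - Ψ t * Ring.inverse (Ψ s))
      (by rw [norm_sub_rev]; linarith)
  simpa [mul_assoc, Ring.inverse_mul_cancel _ hus] using hquot.mul hus

end Invertibility

theorem stmt_7_general {A : Type*} [NormedRing A] [NormedAlgebra ℝ A]
    [CompleteSpace A] (η Ψ : ℝ → A) (L : A) (g₀ : A) (hη : ContinuousOn η (Icc 0 1))
    -- Ψ is the horizontal path of η; it is pointwise invertible, and Hol_η = Ψ 1
    (hΨ : ∀ θ ∈ Icc (0:ℝ) 1, HasDerivWithinAt Ψ (-(η θ * Ψ θ)) (Icc (0:ℝ) 1) θ)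
    (hΨ0 : Ψ 0 = 1)
    (hL : NormedSpace.exp L = Ψ 1)
    (hg₀ : g₀ * L = L * g₀)
    (h : ℝ → A) (hdef : ∀ θ, h θ = Ψ θ * NormedSpace.exp (-(θ • L)))
    (g : ℝ → A) (gdef : ∀ θ, g θ = h θ * g₀ * Ring.inverse (h θ)) :
    (∃ Dg : ℝ → A,
      (∀ θ ∈ Icc (0:ℝ) 1, HasDerivWithinAt g (Dg θ) (Icc (0:ℝ) 1) θ) ∧
      ContinuousOn Dg (Icc 0 1) ∧
      (∀ θ ∈ Icc (0:ℝ) 1, Dg θ + η θ * g θ - g θ * η θ = 0)) ∧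
    g 0 = g₀ ∧ g 1 = g₀ := by
  let _ : NormedAlgebra ℚ A := NormedAlgebra.restrictScalars ℚ ℝ A
  have hL_g₀ : Commute L g₀ := hg₀.symm
  have hg : g = fun θ => Ψ θ * g₀ * Ring.inverse (Ψ θ) := funext fun θ => by
    rw [gdef, hdef, mul_mul_mul_ringInverse_mul_of_commute _ (NormedSpace.isUnit_exp _)
      (hL_g₀.smul_left θ).neg_left.exp_left]
  have hunit := isUnit_of_hasDerivWithinAt_neg_mul hη hΨ (hΨ0 ▸ isUnit_one)
  have hgderiv : ∀ θ ∈ Icc (0:ℝ) 1,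
      HasDerivWithinAt g (g θ * η θ - η θ * g θ) (Icc (0:ℝ) 1) θ := fun θ hθ => by
    rw [hg]
    exact (hΨ θ hθ).mul_mul_ringInverse_of_neg_mul (hunit θ hθ) g₀
  have hgcont : ContinuousOn g (Icc 0 1) := fun θ hθ => (hgderiv θ hθ).continuousWithinAt
  refine ⟨⟨fun θ => g θ * η θ - η θ * g θ, hgderiv, (hgcont.mul hη).sub (hη.mul hgcont),
    fun θ _ => by rw [sub_add_cancel, sub_self]⟩, ?_, ?_⟩
  · simp [hg, hΨ0]
  · simp only [hg, ← hL]
    exact (NormedSpace.isUnit_exp L).mul_mul_ringInverse_of_commute hL_g₀.exp_left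

/-- If `exp(L) = Hol_η`, `h(θ) = Ψ_η(θ)·exp(-θL)` and `g₀` commutes with `L`, then
`g(θ) := h(θ)·g₀·h(θ)⁻¹` is a C¹ solution of `g' + ηg - gη = 0` with `g(0) = g(1) = g₀`. -/
theorem stmt_7 {A : Type*} [NormedRing A] [NormedAlgebra ℝ A] [NormOneClass A]
    [CompleteSpace A] (η Ψ : ℝ → A) (L : A) (g₀ : A) (hη : ContinuousOn η (Icc 0 1))
    -- Ψ is the horizontal path of η; it is pointwise invertible, and Hol_η = Ψ 1
    (hΨ : ∀ θ ∈ Icc (0:ℝ) 1, HasDerivWithinAt Ψ (-(η θ * Ψ θ)) (Icc (0:ℝ) 1) θ)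
    (hΨ0 : Ψ 0 = 1)
    (hL : NormedSpace.exp L = Ψ 1)
    (hg₀ : g₀ * L = L * g₀)
    (h : ℝ → A) (hdef : ∀ θ, h θ = Ψ θ * NormedSpace.exp (-(θ • L)))
    (g : ℝ → A) (gdef : ∀ θ, g θ = h θ * g₀ * Ring.inverse (h θ)) :
    (∃ Dg : ℝ → A,
      (∀ θ ∈ Icc (0:ℝ) 1, HasDerivWithinAt g (Dg θ) (Icc (0:ℝ) 1) θ) ∧
      ContinuousOn Dg (Icc 0 1) ∧
      (∀ θ ∈ Icc (0:ℝ) 1, Dg θ + η θ * g θ - g θ * η θ = 0)) ∧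
    g 0 = g₀ ∧ g 1 = g₀ :=
  stmt_7_general η Ψ L g₀ hη hΨ hΨ0 hL hg₀ h hdef g gdef
end
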